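/- Let n ≥ 2 be an integer, k an integer, and x₁, x₂ complex numbers with x₂ ≠ 0. If π(x₁, x₂) lies on the ray B_{2k−1}, then x₁ = x₂·e^{i(2k−1)π/n}, and the set {e^{2πij/n}·x₁ : 0 ≤ j < n} ∪ {e^{2πij/n}·x₂ : 0 ≤ j < n} equals {x₂·e^{iπm/n} : 0 ≤ m < 2n}, i.e., the 2n points form the vertex set of a regular 2n-gon centered at the origin. -/

import Mathlib

open Real

/-- The map `π : ℂ × ℂ → ℝ³`,
`π(x₁,x₂) = (|x₁|² − |x₂|², 2 Re(x₁ x̄₂), 2 Im(x₁ x̄₂))`. -/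
noncomputable def piMap (x : ℂ × ℂ) : Fin 3 → ℝ :=
  ![‖x.1‖ ^ 2 - ‖x.2‖ ^ 2,
    2 * (x.1 * (starRingEnd ℂ) x.2).re,
    2 * (x.1 * (starRingEnd ℂ) x.2).im]

/-- The ray `B_m = {(0, s·cos(mπ/n), s·sin(mπ/n)) : s > 0} ⊂ ℝ³`. -/
noncomputable def Bray (n : ℕ) (m : ℤ) : Set (Fin 3 → ℝ) :=
  {v | ∃ s : ℝ, 0 < s ∧ v = ![0, s * Real.cos (m * π / n), s * Real.sin (m * π / n)]}

/-!
A point `π(x₁, x₂)` on `B_m` says that `|x₁| = |x₂|` and that `x₁ x̄₂` is a positive multiple of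
`e^{imπ/n}`, so `x₁ = x₂ e^{imπ/n}`. Writing `v_a = x₂ e^{iaπ/n}` (`a ∈ ℤ`) for the vertices of
the regular `2n`-gon through `x₂`, rotation by `e^{2πi/n}` sends `v_a` to `v_{a+2}`, so the two
orbits are the vertices of even index and those of index `≡ m` modulo 2; for odd `m` these
together are all `2n` vertices.
-/

open Complex ComplexConjugate Function Set

noncomputable def polygonVertex (n : ℕ) (x : ℂ) (a : ℤ) : ℂ :=
  x * exp (a * π * I / n)

@[simp]
theorem polygonVertex_zero (n : ℕ) (x : ℂ) : polygonVertex n x 0 = x := by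
  simp [polygonVertex]

theorem polygonVertex_periodic (n : ℕ) (x : ℂ) : Periodic (polygonVertex n x) (2 * n) := by
  intro a
  rcases eq_or_ne n 0 with rfl | hn
  · simp
  · have hnC : (n : ℂ) ≠ 0 := Nat.cast_ne_zero.mpr hn
    have hshift : ((a + 2 * n : ℤ) : ℂ) * π * I / n = a * π * I / n + 2 * π * I := by
      push_cast
      field_simp
    rw [polygonVertex, hshift, Complex.exp_add, exp_two_pi_mul_I, mul_one, polygonVertex]

theorem exp_mul_polygonVertex (n : ℕ) (x : ℂ) (a j : ℤ) :
    exp (2 * π * I * j / n) * polygonVertex n x a = polygonVertex n x (2 * j + a) := by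
  rw [polygonVertex, polygonVertex, mul_left_comm, ← Complex.exp_add]
  congr 2
  push_cast
  ring

theorem Function.Periodic.setOf_exists_lt_eq_range {α : Type*} {f : ℤ → α} {c : ℕ}
    (hf : Periodic f c) (hc : 0 < c) : {z | ∃ j : ℕ, j < c ∧ z = f j} = range f := by
  refine Subset.antisymm (fun z ⟨j, _, hz⟩ => ⟨j, hz.symm⟩) ?_
  rintro _ ⟨a, rfl⟩
  obtain ⟨b, ⟨hb₀, hbc⟩, hab⟩ := hf.exists_mem_Ico₀ (Int.natCast_pos.mpr hc) a
  lift b to ℕ using hb₀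
  exact ⟨b, Int.ofNat_lt.mp hbc, hab⟩

theorem Function.Periodic.comp_mul_add {α β : Type*} [Semiring α] {f : α → β} {a c : α}
    (hf : Periodic f (a * c)) (m : α) : Periodic (fun x => f (a * x + m)) c := fun x => by
  simpa only [mul_add, add_right_comm] using hf (a * x + m)

theorem range_two_mul_add_union_range_two_mul_add {α : Type*} (f : ℤ → α) {m₁ m₂ : ℤ}
    (hm : Odd (m₁ - m₂)) :
    range (fun j : ℤ => f (2 * j + m₁)) ∪ range (fun j : ℤ => f (2 * j + m₂)) = range f := by
  refine Subset.antisymm (union_subset ?_ ?_) ?_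
  · exact range_comp_subset_range (2 * · + m₁) f
  · exact range_comp_subset_range (2 * · + m₂) f
  rintro _ ⟨a, rfl⟩
  obtain ⟨l, hl⟩ := hm
  rcases Int.even_or_odd' (a - m₂) with ⟨j, hj | hj⟩
  · exact Or.inr ⟨j, congrArg f (by linarith)⟩
  · exact Or.inl ⟨j - l, congrArg f (by linarith)⟩

theorem eq_mul_exp_of_mul_conj_eq {a b : ℂ} {r θ : ℝ} (hab : ‖a‖ = ‖b‖) (hb : b ≠ 0)
    (hr : 0 ≤ r) (h : a * conj b = r * exp (θ * I)) : a = b * exp (θ * I) := by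
  have hr_eq : r = ‖b‖ ^ 2 := by
    have := congrArg norm h
    rw [norm_mul, norm_mul, Complex.norm_conj, hab, norm_exp_ofReal_mul_I, Complex.norm_real,
      Real.norm_of_nonneg hr] at this
    rw [sq]
    linarith
  have hb2 : ((‖b‖ ^ 2 : ℝ) : ℂ) ≠ 0 := by exact_mod_cast pow_ne_zero 2 (norm_ne_zero_iff.mpr hb)
  refine mul_right_cancel₀ hb2 ?_
  calc a * ((‖b‖ ^ 2 : ℝ) : ℂ) = a * conj b * b := by push_cast; rw [mul_assoc, conj_mul']
    _ = b * exp (θ * I) * ((‖b‖ ^ 2 : ℝ) : ℂ) := by rw [h, ← hr_eq]; ring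

theorem eq_polygonVertex_of_piMap_mem_Bray {n : ℕ} {m : ℤ} {x₁ x₂ : ℂ} (hx₂ : x₂ ≠ 0)
    (h : piMap (x₁, x₂) ∈ Bray n m) : x₁ = polygonVertex n x₂ m := by
  obtain ⟨s, hs, hv⟩ := h
  have h₀ := congrFun hv 0
  have h₁ := congrFun hv 1
  have h₂ := congrFun hv 2
  simp only [piMap, Matrix.cons_val] at h₀ h₁ h₂
  have hnorm : ‖x₁‖ = ‖x₂‖ := by
    rw [← sq_eq_sq₀ (norm_nonneg _) (norm_nonneg _)]
    linarith
  have hprod : x₁ * conj x₂ = ((s / 2 : ℝ) : ℂ) * exp ((m * π / n : ℝ) * I) := by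
    apply Complex.ext
    · rw [re_ofReal_mul, exp_ofReal_mul_I_re]
      linarith
    · rw [im_ofReal_mul, exp_ofReal_mul_I_im]
      linarith
  rw [eq_mul_exp_of_mul_conj_eq hnorm hx₂ (by positivity) hprod, polygonVertex]
  push_cast
  ring_nf

/-- If `π(x₁,x₂)` lies on the ray `B_{2k−1}`, then `x₁ = x₂·e^{i(2k−1)π/n}` and the
`2n` points `e^{2πij/n}x₁`, `e^{2πij/n}x₂` (for `0 ≤ j < n`) form the vertex set
`{x₂·e^{iπm/n} : 0 ≤ m < 2n}` of a regular `2n`-gon centered at the origin. -/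
theorem piMap_mem_Bray_odd (n : ℕ) (hn : 2 ≤ n) (k : ℤ) (x₁ x₂ : ℂ) (hx₂ : x₂ ≠ 0)
    (h : piMap (x₁, x₂) ∈ Bray n (2 * k - 1)) :
    x₁ = x₂ * Complex.exp (((2 * k - 1 : ℤ) : ℂ) * (π : ℂ) * Complex.I / (n : ℂ)) ∧
    ({z : ℂ | ∃ j : ℕ, j < n ∧ z = Complex.exp (2 * (π : ℂ) * Complex.I * (j : ℂ) / (n : ℂ)) * x₁} ∪
     {z : ℂ | ∃ j : ℕ, j < n ∧ z = Complex.exp (2 * (π : ℂ) * Complex.I * (j : ℂ) / (n : ℂ)) * x₂})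
      = {z : ℂ | ∃ m : ℕ, m < 2 * n ∧ z = x₂ * Complex.exp ((π : ℂ) * Complex.I * (m : ℂ) / (n : ℂ))} := by
  have hx₁ : x₁ = polygonVertex n x₂ (2 * k - 1) := eq_polygonVertex_of_piMap_mem_Bray hx₂ h
  refine ⟨hx₁, ?_⟩
  have hodd (j : ℕ) : exp (2 * π * I * j / n) * x₁ = polygonVertex n x₂ (2 * j + (2 * k - 1)) := by
    rw [hx₁, ← exp_mul_polygonVertex, Int.cast_natCast]
  have heven (j : ℕ) : exp (2 * π * I * j / n) * x₂ = polygonVertex n x₂ (2 * j + 0) := by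
    rw [← exp_mul_polygonVertex, polygonVertex_zero, Int.cast_natCast]
  have hall (m : ℕ) : x₂ * exp (π * I * m / n) = polygonVertex n x₂ m := by
    rw [polygonVertex, Int.cast_natCast]
    ring_nf
  have hper := polygonVertex_periodic n x₂
  simp only [hodd, heven, hall]
  have hn₀ : 0 < n := by omega
  rw [Periodic.setOf_exists_lt_eq_range (c := 2 * n) (by exact_mod_cast hper) (by omega),
    (hper.comp_mul_add (2 * k - 1)).setOf_exists_lt_eq_range hn₀,
    (hper.comp_mul_add 0).setOf_exists_lt_eq_range hn₀]
  exact range_two_mul_add_union_range_two_mul_add _ (by simp)
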